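/- arXiv:0706.3226 — 9 statements merged into one kernel-verified Lean document; each statement's English description precedes it below -/
import Mathlib

section
/- The number of facets of the n-th multiplihedron equals n(n-1)/2 + 2^(n-1) - 1, i.e. the number of lower trees plus the number of upper trees with n leaves. -/
open Finset

theorem sum_Icc_two_sub_eq_sum_range (n : ℕ) :
    ∑ s ∈ Icc 2 n, (n + 1 - s) = ∑ i ∈ range n, i := by
  rcases n.eq_zero_or_pos with rfl | hn
  · rfl
  rw [← Ico_add_one_right_eq_Icc, sum_Ico_reflect (fun j => j) 2 (m := n + 1) (n + 1).le_succ,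
    ← sum_range_add_sum_Ico (fun j => j) hn]
  simp

theorem card_filter_ne_powerset_self {α : Type*} [DecidableEq α] (s : Finset α) :
    #{t ∈ s.powerset | t ≠ s} = 2 ^ #s - 1 := by
  rw [filter_ne', card_erase_of_mem (mem_powerset_self s), card_powerset]

theorem multiplihedron_facet_count_general (n : ℕ) :
    (∑ s ∈ Finset.Icc 2 n, (n + 1 - s)) +
      ((Finset.range (n - 1)).powerset.filter
        (fun S => S ≠ Finset.range (n - 1))).card
    = n * (n - 1) / 2 + (2 ^ (n - 1) - 1) := by
  rw [sum_Icc_two_sub_eq_sum_range, sum_range_id, card_filter_ne_powerset_self, card_range]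

/-- The number of facets of the n-th multiplihedron: the number of lower trees
(choices of `s` consecutive leaves, `2 ≤ s ≤ n`, with `n + 1 - s` positions each)
plus the number of upper trees (proper subsets of the `n - 1` gaps between leaves)
equals `n(n-1)/2 + 2^(n-1) - 1`. -/
theorem multiplihedron_facet_count (n : ℕ) (hn : 2 ≤ n) :
    (∑ s ∈ Finset.Icc 2 n, (n + 1 - s)) +
      ((Finset.range (n - 1)).powerset.filter
        (fun S => S ≠ Finset.range (n - 1))).card
    = n * (n - 1) / 2 + (2 ^ (n - 1) - 1) :=
  multiplihedron_facet_count_general n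
end

section
/- The number of painted binary trees with n leaves satisfies the recursion a(n) = C(n-1) + Σ_{i=1}^{n-1} a(i)·a(n-i) for n ≥ 1, with a(0) = 0. -/
/-- Unpainted planar binary trees. -/
inductive UTree : Type
  | leaf : UTree
  | node : UTree → UTree → UTree

/-- Number of leaves of an unpainted binary tree. -/
def UTree.leaves : UTree → ℕ
  | .leaf => 1
  | .node l r => l.leaves + r.leaves

/-- Painted binary trees: either a painted root edge ending at a bivalent
(type 3) node with an unpainted binary tree above it, or a painted (type 2)
trivalent node joining two painted binary trees. -/
inductive PTree : Type
  | stump : UTree → PTree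
  | node : PTree → PTree → PTree

/-- Number of leaves of a painted binary tree. -/
def PTree.leaves : PTree → ℕ
  | .stump u => u.leaves
  | .node l r => l.leaves + r.leaves

/-!
A painted tree is either a stump carrying an unpainted binary tree, counted by the Catalan
numbers through Mathlib's `BinaryTree Unit`, or a painted node joining two painted trees.
Every tree has at least one leaf, so a pair with `n` leaves in total splits as `i + (n - i)`
with `1 ≤ i ≤ n - 1`, which gives the convolution term and, by strong induction on `n`,
finiteness of every fibre `{t // t.leaves = n}`.
-/

open Finset

section WeightSplitting

variable {α : Type*} (w : α → ℕ)

def sumWeightEqEquivSigma (hw : ∀ a, 1 ≤ w a) (n : ℕ) :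
    {p : α × α // w p.1 + w p.2 = n} ≃
      Σ i : Icc 1 (n - 1), {a // w a = i} × {b // w b = n - i} where
  toFun p := ⟨⟨w p.1.1, by
    have := hw p.1.1; have := hw p.1.2; have := p.2; simp only [mem_Icc]; omega⟩,
    ⟨p.1.1, rfl⟩, ⟨p.1.2, by have := p.2; simp only; omega⟩⟩
  invFun x := ⟨(x.2.1, x.2.2), by
    obtain ⟨⟨i, hi⟩, ⟨a, ha⟩, ⟨b, hb⟩⟩ := x
    simp only [mem_Icc] at hi
    simp only [ha, hb]
    omega⟩
  left_inv _ := rfl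
  right_inv := by
    rintro ⟨⟨i, hi⟩, ⟨a, ha⟩, b⟩
    cases ha
    rfl

variable {w}

lemma finite_sumWeightEq (hw : ∀ a, 1 ≤ w a) (n : ℕ)
    (hfin : ∀ i < n, Finite {a // w a = i}) : Finite {p : α × α // w p.1 + w p.2 = n} := by
  have (i : Icc 1 (n - 1)) : Finite ({a // w a = i} × {b // w b = n - i}) := by
    have hi := mem_Icc.mp i.2
    have := hfin i (by omega)
    have := hfin (n - i) (by omega)
    infer_instance
  exact Finite.of_equiv _ (sumWeightEqEquivSigma w hw n).symm

lemma card_sumWeightEq (hw : ∀ a, 1 ≤ w a) (n : ℕ) [∀ i, Finite {a // w a = i}] :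
    Nat.card {p : α × α // w p.1 + w p.2 = n} =
      ∑ i ∈ Icc 1 (n - 1), Nat.card {a // w a = i} * Nat.card {a // w a = n - i} := by
  rw [Nat.card_congr (sumWeightEqEquivSigma w hw n), Nat.card_sigma]
  simp only [Nat.card_prod]
  exact sum_coe_sort _ fun i => Nat.card {a // w a = i} * Nat.card {a // w a = n - i}

end WeightSplitting

namespace UTree

def toBinaryTree : UTree → BinaryTree Unit
  | .leaf => .nil
  | .node l r => .node () l.toBinaryTree r.toBinaryTree

def ofBinaryTree : BinaryTree Unit → UTree
  | .nil => .leaf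
  | .node _ l r => .node (ofBinaryTree l) (ofBinaryTree r)

def equivBinaryTree : UTree ≃ BinaryTree Unit where
  toFun := toBinaryTree
  invFun := ofBinaryTree
  left_inv u := by
    induction u with
    | leaf => rfl
    | node l r hl hr => simp only [toBinaryTree, ofBinaryTree, hl, hr]
  right_inv t := by
    induction t with
    | nil => rfl
    | node _ l r hl hr => simp only [toBinaryTree, ofBinaryTree, hl, hr]

lemma numLeaves_toBinaryTree (u : UTree) : u.toBinaryTree.numLeaves = u.leaves := by
  induction u with
  | leaf => rfl
  | node l r hl hr => simp only [toBinaryTree, leaves, BinaryTree.numLeaves, hl, hr]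

lemma leaves_eq_numNodes_add_one (u : UTree) : u.leaves = u.toBinaryTree.numNodes + 1 := by
  rw [← numLeaves_toBinaryTree, BinaryTree.numLeaves_eq_numNodes_succ]

def leavesEqEquiv (m : ℕ) :
    {u : UTree // u.leaves = m + 1} ≃ BinaryTree.treesOfNumNodesEq m :=
  equivBinaryTree.subtypeEquiv fun u => by
    rw [BinaryTree.mem_treesOfNumNodesEq, leaves_eq_numNodes_add_one, Nat.add_right_cancel_iff]
    rfl

lemma card_leaves_eq (m : ℕ) : Nat.card {u : UTree // u.leaves = m + 1} = catalan m := by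
  rw [Nat.card_congr (leavesEqEquiv m), Nat.card_eq_fintype_card, Fintype.card_coe,
    BinaryTree.treesOfNumNodesEq_card_eq_catalan]

instance finite_leaves_eq (m : ℕ) : Finite {u : UTree // u.leaves = m + 1} :=
  Finite.of_equiv _ (leavesEqEquiv m).symm

end UTree

namespace PTree

lemma one_le_leaves (t : PTree) : 1 ≤ t.leaves := by
  induction t with
  | stump u => simp only [leaves, u.leaves_eq_numNodes_add_one, Nat.le_add_left]
  | node l r hl hr => exact Nat.le_add_right_of_le hl

instance isEmpty_leaves_eq_zero : IsEmpty {t : PTree // t.leaves = 0} :=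
  ⟨fun t => absurd t.2 (Nat.one_le_iff_ne_zero.mp t.1.one_le_leaves)⟩

def leavesEqEquiv (n : ℕ) :
    {t : PTree // t.leaves = n} ≃
      {u : UTree // u.leaves = n} ⊕ {p : PTree × PTree // p.1.leaves + p.2.leaves = n} where
  toFun
    | ⟨.stump u, h⟩ => .inl ⟨u, h⟩
    | ⟨.node l r, h⟩ => .inr ⟨(l, r), h⟩
  invFun
    | .inl ⟨u, h⟩ => ⟨.stump u, h⟩
    | .inr ⟨(l, r), h⟩ => ⟨.node l r, h⟩
  left_inv := by rintro ⟨u | ⟨l, r⟩, h⟩ <;> rfl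
  right_inv := by rintro (⟨u, h⟩ | ⟨⟨l, r⟩, h⟩) <;> rfl

instance finite_leaves_eq (n : ℕ) : Finite {t : PTree // t.leaves = n} := by
  induction n using Nat.strong_induction_on with
  | h n ih =>
    cases n with
    | zero => infer_instance
    | succ m =>
      have := finite_sumWeightEq one_le_leaves (m + 1) ih
      exact Finite.of_equiv _ (leavesEqEquiv (m + 1)).symm

end PTree

/-- The number of painted binary trees with `n` leaves satisfies
`a n = C(n-1) + Σ_{i=1}^{n-1} a i * a (n-i)` for `n ≥ 1`, with `a 0 = 0`,
where `C` is the Catalan number function. -/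
theorem painted_tree_count_recursion (n : ℕ) (hn : 1 ≤ n) :
    Nat.card {t : PTree // t.leaves = 0} = 0 ∧
    Nat.card {t : PTree // t.leaves = n} =
      catalan (n - 1) + ∑ i ∈ Finset.Icc 1 (n - 1),
        Nat.card {t : PTree // t.leaves = i} *
          Nat.card {t : PTree // t.leaves = n - i} := by
  refine ⟨Nat.card_of_isEmpty, ?_⟩
  obtain ⟨m, rfl⟩ := Nat.exists_eq_add_of_le' hn
  have := finite_sumWeightEq PTree.one_le_leaves (m + 1) fun i _ => inferInstance
  rw [Nat.card_congr (PTree.leavesEqEquiv (m + 1)), Nat.card_sum, UTree.card_leaves_eq,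
    card_sumWeightEq PTree.one_le_leaves, Nat.add_sub_cancel]
end

section
/- The formal power series A(x) = (1 − sqrt(2·sqrt(1−4x) − 1))/2 satisfies the functional equation A(x) = x·c(x) + A(x)², where c(x) = (1 − sqrt(1−4x))/(2x) is the Catalan generating function. -/
open PowerSeries

theorem multiplihedron_gf_equation_general (A c S T : PowerSeries ℚ)
    (hT : T ^ 2 = 2 * S - 1)
    (hA : 2 * A = 1 - T) (hc : 2 * (X * c) = 1 - S) :
    A = X * c + A ^ 2 := by
  -- `(2A)² = (1 - T)² = 2S - 2T`, which cancels against `2·(2Xc) = 2 - 2S`.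
  have h4 : (4 : PowerSeries ℚ) * A = 4 * (X * c + A ^ 2) := by
    linear_combination 2 * hA - 2 * hc - (2 * A + 1 - T) * hA - hT
  have hfour : (4 : PowerSeries ℚ) ≠ 0 := fun h => by
    simpa [map_ofNat] using congrArg constantCoeff h
  exact mul_left_cancel₀ hfour h4

/-- The formal power series `A = (1 - sqrt(2·sqrt(1-4x) - 1))/2` satisfies
`A = x·c + A²`, where `c = (1 - sqrt(1-4x))/(2x)` is the Catalan generating
function.  Here `S` plays the role of `sqrt(1-4x)` and `T` of
`sqrt(2·sqrt(1-4x) - 1)`. -/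
theorem multiplihedron_gf_equation (A c S T : PowerSeries ℚ)
    (hS0 : constantCoeff S = 1) (hS : S ^ 2 = 1 - 4 * X)
    (hT0 : constantCoeff T = 1) (hT : T ^ 2 = 2 * S - 1)
    (hA : 2 * A = 1 - T) (hc : 2 * (X * c) = 1 - S) :
    A = X * c + A ^ 2 :=
  multiplihedron_gf_equation_general A c S T hT hA hc
end

section
/- If A(x) is the formal power series satisfying A = x·c(x) + A² with A(0)=0, and c(x) is the Catalan generating function satisfying c = 1 + x·c², then A(x) = x·c(x)·c(x·c(x)), i.e. A is the Catalan transform of the series x·c(x). -/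
/-!
Two solutions `f`, `g` of `f = b + f²` without constant term satisfy `(f - g)(1 - f - g) = 0`, and
`1 - f - g` is a unit, so the equation `A = x·c + A²` has at most one such solution. The series
`x·c·d` is one, because `d = 1 + (x·c)·d²` multiplied by `x·c` gives `x·c·d = x·c + (x·c·d)²`.
-/

open PowerSeries

theorem PowerSeries.eq_of_eq_add_sq {R : Type*} [CommRing R] {b f g : PowerSeries R}
    (hf0 : constantCoeff f = 0) (hg0 : constantCoeff g = 0)
    (hf : f = b + f ^ 2) (hg : g = b + g ^ 2) : f = g := by
  have hunit : IsUnit (1 - (f + g)) := by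
    rw [isUnit_iff_constantCoeff]
    simp [hf0, hg0]
  have hprod : (f - g) * (1 - (f + g)) = 0 := by
    linear_combination hf - hg
  exact sub_eq_zero.mp ((hunit.mul_left_eq_zero).mp hprod)

theorem multiplihedron_gf_catalan_transform_general (A c d : PowerSeries ℚ)
    (hA0 : constantCoeff A = 0) (hA : A = X * c + A ^ 2)
    (hd : d = 1 + (X * c) * d ^ 2) :
    A = X * c * d :=
  eq_of_eq_add_sq hA0 (by simp) hA (by linear_combination (X * c) * hd)

/-- If `A` is the formal power series with `A(0) = 0` satisfying
`A = x·c + A²`, where `c` is the Catalan generating function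
(`c = 1 + x·c²`, `c(0) = 1`), and `d` is the composite `c(x·c(x))`,
characterized by `d(0) = 1` and `d = 1 + (x·c)·d²`, then
`A = x·c(x)·c(x·c(x))`, i.e. `A` is the Catalan transform of `x·c(x)`. -/
theorem multiplihedron_gf_catalan_transform (A c d : PowerSeries ℚ)
    (hA0 : constantCoeff A = 0) (hA : A = X * c + A ^ 2)
    (hc0 : constantCoeff c = 1) (hc : c = 1 + X * c ^ 2)
    (hd0 : constantCoeff d = 1) (hd : d = 1 + (X * c) * d ^ 2) :
    A = X * c * d :=
  multiplihedron_gf_catalan_transform_general A c d hA0 hA hd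
end

section
/- The number of vertices of the n-th multiplihedron is given by the closed formula a(n) = (1/n)·Σ_{k=1}^{n} binomial(2n−k−1, n−1)·binomial(2k−2, k−1), for n ≥ 1; in particular this formula satisfies the recursion a(n) = C(n−1) + Σ_{i=1}^{n−1} a(i)·a(n−i). -/
/-!
Let `f = X * catalanSeries = ∑ catalan (n - 1) Xⁿ`, so that `f = X + f²`. The recursion says that
the generating function `A` of `a` satisfies `A = f + A²`, with `A(0) = 0`. Substituting `f` into
`f = X + f²` shows that `f ∘ f` solves the same equation, and the solution is unique because
`(A - B)(1 - A - B) = 0` with `1 - A - B` a unit. Hence `a n = ∑ₖ catalan (k - 1) [Xⁿ] fᵏ`. The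
ballot numbers `[Xⁿ] fᵏ = (k / n) C(2n - k - 1, n - 1)` follow by induction from
`C^(k+1) = C^k + X C^(k+2)`, and `k · catalan (k - 1) = C(2k - 2, k - 1)`.
-/

open PowerSeries Finset

theorem Finset.sum_range_succ_eq_sum_Icc_one {M : Type*} [AddCommMonoid M] {F : ℕ → M}
    (hF : F 0 = 0) (n : ℕ) : ∑ i ∈ range (n + 1), F i = ∑ i ∈ Icc 1 n, F i := by
  refine (sum_subset (fun i hi => ?_) fun i hi hi' => ?_).symm
  · rw [mem_range]; rw [mem_Icc] at hi; omega
  · rw [mem_range] at hi; rw [mem_Icc] at hi'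
    rwa [show i = 0 by omega]

theorem Finset.Nat.sum_antidiagonal_eq_sum_Icc_one {M : Type*} [AddCommMonoid M]
    {F : ℕ → ℕ → M} (hF₁ : ∀ j, F 0 j = 0) (hF₂ : ∀ i, F i 0 = 0) (n : ℕ) :
    ∑ p ∈ antidiagonal n, F p.1 p.2 = ∑ i ∈ Icc 1 (n - 1), F i (n - i) := by
  rw [Nat.sum_antidiagonal_eq_sum_range_succ F]
  refine (sum_subset (fun i hi => ?_) fun i hi hi' => ?_).symm
  · rw [mem_range]; rw [mem_Icc] at hi; omega
  · rw [mem_range] at hi; rw [mem_Icc] at hi'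
    obtain rfl | rfl : i = 0 ∨ i = n := by omega
    exacts [hF₁ _, by rw [Nat.sub_self, hF₂]]

namespace PowerSeries

section Substitution

variable {R : Type*} [CommRing R]

theorem eq_of_eq_add_sq_s7 {g A B : R⟦X⟧} (hA₀ : constantCoeff A = 0) (hB₀ : constantCoeff B = 0)
    (hA : A = g + A ^ 2) (hB : B = g + B ^ 2) : A = B := by
  have hunit : IsUnit (1 - A - B) := isUnit_iff_constantCoeff.mpr (by simp [hA₀, hB₀])
  have hprod : (A - B) * (1 - A - B) = 0 := by linear_combination hA - hB
  exact sub_eq_zero.mp (hunit.mul_left_eq_zero.mp hprod)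

theorem subst_self_eq_add_sq {g : R⟦X⟧} (hg₀ : constantCoeff g = 0) (hg : g = X + g ^ 2) :
    g.subst g = g + (g.subst g) ^ 2 := by
  have hs := HasSubst.of_constantCoeff_zero' hg₀
  calc g.subst g = (X + g ^ 2).subst g := congrArg (subst g) hg
    _ = g + (g.subst g) ^ 2 := by rw [subst_add hs, subst_pow hs, subst_X hs]

theorem coeff_pow_eq_zero_of_lt {g : R⟦X⟧} (hg₀ : constantCoeff g = 0) {n k : ℕ} (h : n < k) :
    coeff n (g ^ k) = 0 := by
  obtain ⟨q, rfl⟩ := X_dvd_iff.mpr hg₀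
  rw [mul_pow, coeff_X_pow_mul', if_neg (by omega)]

theorem coeff_subst_eq_sum {g : R⟦X⟧} (hg₀ : constantCoeff g = 0) (f : R⟦X⟧) (n : ℕ) :
    coeff n (f.subst g) = ∑ k ∈ range (n + 1), coeff k f * coeff n (g ^ k) := by
  rw [coeff_subst' (HasSubst.of_constantCoeff_zero' hg₀)]
  refine finsum_eq_sum_of_support_subset _ fun k hk => ?_
  rw [coe_range, Set.mem_Iio, Nat.lt_succ_iff]
  by_contra! hnk
  exact hk (by simp only [coeff_pow_eq_zero_of_lt hg₀ hnk, smul_zero])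

end Substitution

theorem catalanSeries_pow_succ (k : ℕ) :
    catalanSeries ^ (k + 1) = catalanSeries ^ k + X * catalanSeries ^ (k + 2) := by
  calc catalanSeries ^ (k + 1) = catalanSeries ^ k * (catalanSeries ^ 2 * X + 1) := by
        rw [catalanSeries_sq_mul_X_add_one, pow_succ]
    _ = catalanSeries ^ k + X * catalanSeries ^ (k + 2) := by ring

theorem coeff_succ_catalanSeries_pow_succ (m k : ℕ) :
    coeff (m + 1) (catalanSeries ^ (k + 1)) =
      coeff (m + 1) (catalanSeries ^ k) + coeff m (catalanSeries ^ (k + 2)) := by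
  rw [catalanSeries_pow_succ, map_add, coeff_succ_X_mul]

/-- `[Xᵐ] C^(k+1) = C(2m+k, m) - C(2m+k, m-1)`, with both binomials written symmetrically so that
neither the subtraction nor `m - 1` is truncated at `m = 0`. -/
theorem coeff_catalanSeries_pow_add_choose (m k : ℕ) :
    coeff m (catalanSeries ^ (k + 1)) + (2 * m + k).choose (m + k + 1) =
      (2 * m + k).choose (m + k) := by
  induction m generalizing k with
  | zero => simp [coeff_zero_eq_constantCoeff]
  | succ m ihm =>
    induction k with
    | zero =>
      have hm := ihm 1
      have pascal₁ := Nat.choose_succ_succ' (2 * m + 1) (m + 1)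
      have pascal₂ := Nat.choose_succ_succ' (2 * m + 1) m
      have hsymm := Nat.choose_symm_half m
      rw [coeff_succ_catalanSeries_pow_succ, pow_zero, coeff_one, if_neg m.succ_ne_zero]
      ring_nf at hm pascal₁ pascal₂ hsymm ⊢
      omega
    | succ k ihk =>
      have hm := ihm (k + 2)
      have pascal₁ := Nat.choose_succ_succ' (2 * m + k + 2) (m + k + 2)
      have pascal₂ := Nat.choose_succ_succ' (2 * m + k + 2) (m + k + 1)
      rw [coeff_succ_catalanSeries_pow_succ]
      ring_nf at hm pascal₁ pascal₂ ihk ⊢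
      omega

theorem add_succ_mul_coeff_catalanSeries_pow (m k : ℕ) :
    (m + k + 1) * coeff m (catalanSeries ^ (k + 1)) = (k + 1) * (2 * m + k).choose m := by
  have hdiff := coeff_catalanSeries_pow_add_choose m k
  have hstep := Nat.choose_succ_right_eq (2 * m + k) (m + k)
  rw [show 2 * m + k - (m + k) = m by omega] at hstep
  rw [Nat.choose_symm_of_eq_add (by ring : 2 * m + k = m + (m + k))]
  nlinarith

theorem X_mul_catalanSeries_eq : X * catalanSeries = X + (X * catalanSeries) ^ 2 := by
  conv_lhs => rw [← catalanSeries_sq_mul_X_add_one]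
  ring

theorem mul_coeff_X_mul_catalanSeries_pow {n k : ℕ} (hk : 1 ≤ k) (hkn : k ≤ n) :
    n * coeff n ((X * catalanSeries) ^ k) = k * (2 * n - k - 1).choose (n - 1) := by
  obtain ⟨j, rfl⟩ := Nat.exists_eq_add_of_le' hk
  obtain ⟨m, rfl⟩ := Nat.exists_eq_add_of_le hkn
  rw [mul_pow, coeff_X_pow_mul', if_pos le_self_add, Nat.add_sub_cancel_left,
    show j + 1 + m = m + j + 1 by ring, add_succ_mul_coeff_catalanSeries_pow,
    show 2 * (m + j + 1) - (j + 1) - 1 = 2 * m + j by omega, Nat.add_sub_cancel,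
    Nat.choose_symm_of_eq_add (by ring : 2 * m + j = m + (m + j))]

theorem X_mul_mk_eq_X_mul_catalanSeries_add_sq {a : ℕ → ℕ}
    (hrec : ∀ n, 1 ≤ n → a n = catalan (n - 1) + ∑ i ∈ Icc 1 (n - 1), a i * a (n - i)) :
    X * PowerSeries.mk (fun n => a (n + 1)) =
      X * catalanSeries + (X * PowerSeries.mk (fun n => a (n + 1))) ^ 2 := by
  set A := X * PowerSeries.mk (fun n => a (n + 1))
  have hA : ∀ i, 1 ≤ i → coeff i A = a i := fun i hi => by
    obtain ⟨j, rfl⟩ := Nat.exists_eq_add_of_le' hi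
    rw [coeff_succ_X_mul, coeff_mk]
  ext n
  rcases Nat.eq_zero_or_pos n with rfl | hn
  · simp [A]
  · rw [hA n hn, hrec n hn, map_add, sq, coeff_mul n A A,
      Nat.sum_antidiagonal_eq_sum_Icc_one (F := fun i j => coeff i A * coeff j A) (by simp [A])
        (by simp [A])]
    obtain ⟨m, rfl⟩ := Nat.exists_eq_add_of_le' hn
    rw [coeff_succ_X_mul, catalanSeries_coeff, Nat.add_sub_cancel]
    refine congrArg _ (sum_congr rfl fun i hi => ?_)
    rw [mem_Icc] at hi
    rw [hA i hi.1, hA (m + 1 - i) (by omega)]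

theorem eq_sum_catalan_mul_coeff_X_mul_catalanSeries_pow {a : ℕ → ℕ}
    (hrec : ∀ n, 1 ≤ n → a n = catalan (n - 1) + ∑ i ∈ Icc 1 (n - 1), a i * a (n - i))
    {n : ℕ} (hn : 1 ≤ n) :
    a n = ∑ k ∈ Icc 1 n, catalan (k - 1) * coeff n ((X * catalanSeries) ^ k) := by
  -- substitution of power series is only available over rings, hence the detour through `ℤ`
  set g := (X * catalanSeries).map (Nat.castRingHom ℤ)
  have hg₀ : constantCoeff g = 0 := by simp [g]
  have hg : g = X + g ^ 2 := by
    simpa [g] using congrArg (map (Nat.castRingHom ℤ)) X_mul_catalanSeries_eq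
  have hA : (X * PowerSeries.mk (fun n => a (n + 1))).map (Nat.castRingHom ℤ) = g.subst g :=
    eq_of_eq_add_sq_s7 (by simp) (constantCoeff_subst_eq_zero hg₀ g hg₀)
      (by simpa [g] using
        congrArg (map (Nat.castRingHom ℤ)) (X_mul_mk_eq_X_mul_catalanSeries_add_sq hrec))
      (subst_self_eq_add_sq hg₀ hg)
  have hcoeff := congrArg (coeff n) hA
  rw [coeff_map, coeff_subst_eq_sum hg₀, sum_range_succ_eq_sum_Icc_one (by simp [g])] at hcoeff
  obtain ⟨m, rfl⟩ := Nat.exists_eq_add_of_le' hn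
  rw [coeff_succ_X_mul, coeff_mk] at hcoeff
  refine Nat.cast_injective (R := ℤ) (hcoeff.trans ?_)
  push_cast
  refine sum_congr rfl fun k hk => ?_
  obtain ⟨j, rfl⟩ := Nat.exists_eq_add_of_le' (mem_Icc.mp hk).1
  rw [← map_pow, coeff_map, coeff_map, coeff_succ_X_mul, catalanSeries_coeff, Nat.add_sub_cancel]
  rfl

end PowerSeries

theorem multiplihedron_vertex_closed_formula_general (a : ℕ → ℕ)
    (hrec : ∀ n, 1 ≤ n →
      a n = catalan (n - 1) + ∑ i ∈ Finset.Icc 1 (n - 1), a i * a (n - i)) :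
    ∀ n, 1 ≤ n → n * a n =
      ∑ k ∈ Finset.Icc 1 n,
        Nat.choose (2 * n - k - 1) (n - 1) * Nat.choose (2 * k - 2) (k - 1) := by
  intro n hn
  rw [eq_sum_catalan_mul_coeff_X_mul_catalanSeries_pow hrec hn, mul_sum]
  refine sum_congr rfl fun k hk => ?_
  obtain ⟨hk₁, hkn⟩ := mem_Icc.mp hk
  have hcatalan : k * catalan (k - 1) = (2 * k - 2).choose (k - 1) := by
    obtain ⟨j, rfl⟩ := Nat.exists_eq_add_of_le' hk₁
    rw [Nat.add_sub_cancel, succ_mul_catalan_eq_centralBinom, Nat.centralBinom_eq_two_mul_choose,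
      show 2 * (j + 1) - 2 = 2 * j by omega]
  rw [mul_left_comm, mul_coeff_X_mul_catalanSeries_pow hk₁ hkn, ← mul_assoc,
    mul_comm (catalan _), hcatalan, mul_comm]

/-- Closed formula for the number of vertices of the n-th multiplihedron:
if `a 0 = 0` and `a n = C(n-1) + Σ_{i=1}^{n-1} a i * a (n-i)` for `n ≥ 1`,
then `a n = (1/n) Σ_{k=1}^{n} C(2n-k-1, n-1) · C(2k-2, k-1)` for all `n ≥ 1`
(stated multiplied through by `n`). -/
theorem multiplihedron_vertex_closed_formula (a : ℕ → ℕ) (h0 : a 0 = 0)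
    (hrec : ∀ n, 1 ≤ n →
      a n = catalan (n - 1) + ∑ i ∈ Finset.Icc 1 (n - 1), a i * a (n - i)) :
    ∀ n, 1 ≤ n → n * a n =
      ∑ k ∈ Finset.Icc 1 n,
        Nat.choose (2 * n - k - 1) (n - 1) * Nat.choose (2 * k - 2) (k - 1) :=
  multiplihedron_vertex_closed_formula_general a hrec
end

section
/- For any binary tree t with n leaves (n ≥ 1), the sum of the Loday coordinates equals n(n−1)/2: if at the i-th internal node the left and right subtrees have l_i and r_i leaves respectively, then Σ_{i=1}^{n−1} l_i·r_i = n(n−1)/2. -/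
/-- Sum over all internal nodes of (leaves of left subtree) · (leaves of right
subtree): the sum of the Loday coordinates. -/
def UTree.nodeSum : UTree → ℕ
  | .leaf => 0
  | .node l r => l.leaves * r.leaves + l.nodeSum + r.nodeSum

namespace UTree

/-- Stated without subtraction, so that the inductive step is the identity
`(l + r)^2 = l^2 + r^2 + 2lr`. -/
theorem two_mul_nodeSum_add_leaves (t : UTree) : 2 * t.nodeSum + t.leaves = t.leaves ^ 2 := by
  induction t with
  | leaf => rfl
  | node l r ihl ihr =>
    simp only [nodeSum, leaves]
    linear_combination ihl + ihr

theorem two_mul_nodeSum (t : UTree) : 2 * t.nodeSum = t.leaves * (t.leaves - 1) := by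
  rw [Nat.mul_sub_one, ← sq, ← two_mul_nodeSum_add_leaves, Nat.add_sub_cancel]

end UTree

theorem loday_coordinate_sum_general (t : UTree) (n : ℕ) (h : t.leaves = n) :
    2 * t.nodeSum = n * (n - 1) := by
  rw [← h, t.two_mul_nodeSum]

/-- Loday's lemma: for any binary tree with `n` leaves, the sum of the Loday
coordinates `Σ l_i · r_i` equals `n(n-1)/2`. -/
theorem loday_coordinate_sum (t : UTree) (n : ℕ) (h : t.leaves = n)
    (hn : 1 ≤ n) : 2 * t.nodeSum = n * (n - 1) :=
  loday_coordinate_sum_general t n h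
end

section
/- For n ≥ 2 and q ∈ (0,1), the convex hull of the 6 points obtained from 3-leaf painted binary trees, namely (1,2), (2,1), (q,2), (2,q), (q,2q), (2q,q) in ℝ², is a hexagon: each of the 6 points is a vertex (extreme point) of the hull. -/
/-!
Each of the six points is the unique maximiser, among the six, of a linear functional
`(x, y) ↦ c x + d y`; for `0 < q < 1` the directions `(c, d) = (1, 2), (2, 1), (-2, 1), (1, -2),
(-2, -1), (-1, -2)` do the job. A point of `s` that uniquely maximises a linear functional on `s`
is an exposed point of the convex hull of `s`, hence an extreme point.
-/

open Set

section LinearOrderedField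

variable {𝕜 E : Type*} [Field 𝕜] [LinearOrder 𝕜] [IsStrictOrderedRing 𝕜] [AddCommGroup E]
  [Module 𝕜 E] {s : Set E} {p x : E}

theorem eq_left_of_mem_segment_of_le {b : E} (f : E →ₗ[𝕜] 𝕜) (hb : f b < f p)
    (hx : x ∈ segment 𝕜 p b) (hfx : f p ≤ f x) : x = p := by
  obtain ⟨u, v, -, hv, huv, rfl⟩ := hx
  obtain rfl : u = 1 - v := eq_sub_of_add_eq huv
  have hf : f ((1 - v) • p + v • b) = f p - v * (f p - f b) := by
    simp only [map_add, map_smul, smul_eq_mul]; ring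
  obtain rfl : v = 0 := le_antisymm (by nlinarith) hv
  simp

theorem eq_of_mem_convexHull_of_le (f : E →ₗ[𝕜] 𝕜) (hp : p ∈ s)
    (h : ∀ y ∈ s, y ≠ p → f y < f p) (hx : x ∈ convexHull 𝕜 s) (hfx : f p ≤ f x) : x = p := by
  have hs : s = insert p (s \ {p}) := (insert_sdiff_singleton.trans (insert_eq_of_mem hp)).symm
  obtain hempty | hne := (s \ {p}).eq_empty_or_nonempty
  · rwa [hs, hempty, insert_empty_eq, convexHull_singleton] at hx
  rw [hs, convexHull_insert hne, convexJoin_singleton_left, mem_iUnion₂] at hx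
  obtain ⟨b, hb, hxb⟩ := hx
  have hfb : convexHull 𝕜 (s \ {p}) ⊆ {y | f y < f p} :=
    convexHull_min (fun y hy ↦ h y hy.1 hy.2) (convex_halfSpace_lt f.isLinear _)
  exact eq_left_of_mem_segment_of_le f (hfb hb) hxb hfx

variable [TopologicalSpace 𝕜] [TopologicalSpace E]

theorem mem_exposedPoints_convexHull_of_forall_lt (l : StrongDual 𝕜 E) (hp : p ∈ s)
    (h : ∀ y ∈ s, y ≠ p → l y < l p) : p ∈ (convexHull 𝕜 s).exposedPoints 𝕜 := by
  refine ⟨subset_convexHull 𝕜 s hp, l, fun y hy ↦ ⟨?_, eq_of_mem_convexHull_of_le l hp h hy⟩⟩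
  refine convexHull_min (fun z hz ↦ ?_) (convex_halfSpace_le l.toLinearMap.isLinear _) hy
  obtain rfl | hzp := eq_or_ne z p
  exacts [le_rfl, (h z hz hzp).le]

end LinearOrderedField

theorem Prod.mem_extremePoints_convexHull_of_forall_lt {𝕜 : Type*} [Field 𝕜] [LinearOrder 𝕜]
    [IsStrictOrderedRing 𝕜] [TopologicalSpace 𝕜] [IsTopologicalRing 𝕜]
    {s : Set (𝕜 × 𝕜)} {p : 𝕜 × 𝕜} (hp : p ∈ s) (c d : 𝕜)
    (h : ∀ x ∈ s, x ≠ p → c * x.1 + d * x.2 < c * p.1 + d * p.2) :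
    p ∈ (convexHull 𝕜 s).extremePoints 𝕜 :=
  exposedPoints_subset_extremePoints <| mem_exposedPoints_convexHull_of_forall_lt
    (c • ContinuousLinearMap.fst 𝕜 𝕜 𝕜 + d • ContinuousLinearMap.snd 𝕜 𝕜 𝕜) hp (by simpa using h)

/-- For `q ∈ (0,1)`, the six points `(1,2), (2,1), (q,2), (2,q), (q,2q), (2q,q)`
in `ℝ²`, obtained from the six 3-leaf painted binary trees, are all extreme
points of their convex hull: the hull is a hexagon. -/
theorem J3_hexagon (q : ℝ) (hq : q ∈ Set.Ioo (0 : ℝ) 1) :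
    ∀ p ∈ ({((1 : ℝ), (2 : ℝ)), (2, 1), (q, 2), (2, q), (q, 2 * q), (2 * q, q)} :
        Set (ℝ × ℝ)),
      p ∈ Set.extremePoints ℝ (convexHull ℝ
        ({((1 : ℝ), (2 : ℝ)), (2, 1), (q, 2), (2, q), (q, 2 * q), (2 * q, q)} :
          Set (ℝ × ℝ))) := by
  obtain ⟨hq0, hq1⟩ := hq
  intro p hp
  rcases hp with rfl | rfl | rfl | rfl | rfl | rfl <;>
    [refine Prod.mem_extremePoints_convexHull_of_forall_lt (by simp) 1 2 ?_;
     refine Prod.mem_extremePoints_convexHull_of_forall_lt (by simp) 2 1 ?_;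
     refine Prod.mem_extremePoints_convexHull_of_forall_lt (by simp) (-2) 1 ?_;
     refine Prod.mem_extremePoints_convexHull_of_forall_lt (by simp) 1 (-2) ?_;
     refine Prod.mem_extremePoints_convexHull_of_forall_lt (by simp) (-2) (-1) ?_;
     refine Prod.mem_extremePoints_convexHull_of_forall_lt (by simp) (-1) (-2) ?_] <;>
  rintro x (rfl | rfl | rfl | rfl | rfl | rfl) hx <;> first | exact absurd rfl hx | linarith
end

section
/- For a painted binary tree t with k internal edges and n leaves, the solution space of the level-tree constraint equations (one equation per painted trivalent node, equating the leaf-number-weighted averages of painted interior edge lengths of the two subtrees) intersected with [0,1]^k is an (n−1)-dimensional polytope; in particular, the linear system has solution space of dimension n−1, and there exists a solution all of whose coordinates lie in (0, 1/2]. -/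
/-- Number of interior edges of an unpainted subtree hung below a node,
including its own root edge (which is interior iff the subtree is not a
single leaf). -/
def UTree.ie : UTree → ℕ
  | .leaf => 0
  | .node l r => 1 + l.ie + r.ie

/-- Number of interior edges of a painted subtree hung below a painted node,
including its own (painted) root edge. -/
def PTree.te : PTree → ℕ
  | .stump u => 1 + u.ie
  | .node l r => 1 + l.te + r.te

/-- Number of interior edges of a painted binary tree (root edge excluded). -/
def PTree.k : PTree → ℕ
  | .stump u => u.ie
  | .node l r => l.te + r.te

/-- Sum of the painted interior edge lengths of a decorated painted subtree,
including its root-edge length; lengths are listed root edge first, then the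
lengths of the left subtree, then those of the right subtree. -/
noncomputable def PTree.psum : PTree → List ℝ → ℝ
  | .stump _, d => d.headI
  | .node l r, d =>
      d.headI + l.psum (d.tail.take l.te) + r.psum (d.tail.drop l.te)

/-- The level-tree constraints on a decorated painted subtree (decoration
includes its root-edge length): at each painted type (2) node, the
leaf-number-weighted averages of the painted interior edge lengths of the two
subtrees agree (stated cross-multiplied). -/
def PTree.okI : PTree → List ℝ → Prop
  | .stump _, _ => True
  | .node l r, d =>
      (r.leaves : ℝ) * l.psum (d.tail.take l.te) =
          (l.leaves : ℝ) * r.psum (d.tail.drop l.te) ∧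
        l.okI (d.tail.take l.te) ∧ r.okI (d.tail.drop l.te)

/-- The level-tree constraints on a length assignment to the `k` interior
edges of a painted binary tree (a dummy root-edge length `0` is prepended;
it occurs in no constraint). -/
def PTree.ok (t : PTree) (d : List ℝ) : Prop := t.okI ((0 : ℝ) :: d)

/-!
Let `S(t)` be the solution space of the constraints of a painted subtree `t`, its root edge
included. Then `dim S(t)` is the number of leaves `|t|`: at a painted node with subtrees `l`, `r`
the root edge is free, and the other coordinates form the kernel, inside `S(l) × S(r)`, of the
functional `(u, v) ↦ |r| Σu - |l| Σv`, which is nonzero because `S(l)` contains solutions with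
positive edge sum. The root edge of the whole tree occurs in no constraint, so discarding it
loses exactly one dimension.

Solutions with all lengths in `(0, s]` and edge sum `s` are built from the root up: the root edge
gets `s / 2`, and the other `s / 2` is shared by the two subtrees in proportion to their numbers
of leaves, which is exactly the constraint at the node.
-/

open Module

section LinearAlgebra

variable {K M N : Type*} [Field K] [AddCommGroup M] [Module K M] [AddCommGroup N] [Module K N]

theorem Submodule.finrank_prod [FiniteDimensional K M] [FiniteDimensional K N]
    (p : Submodule K M) (q : Submodule K N) :
    finrank K (p.prod q) = finrank K p + finrank K q := by
  rw [← p.range_subtype, ← q.range_subtype, ← LinearMap.range_prodMap,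
    LinearMap.finrank_range_of_inj, Module.finrank_prod, p.range_subtype, q.range_subtype]
  exact Prod.map_injective.mpr ⟨p.injective_subtype, q.injective_subtype⟩

theorem Submodule.finrank_inf_ker_add_one [FiniteDimensional K M] {W : Submodule K M}
    {φ : M →ₗ[K] K} {w : M} (hw : w ∈ W) (hφw : φ w ≠ 0) :
    finrank K ↥(W ⊓ LinearMap.ker φ) + 1 = finrank K W := by
  have hφ : φ ∘ₗ W.subtype ≠ 0 := fun h => hφw (LinearMap.congr_fun h ⟨w, hw⟩)
  rw [← Module.Dual.finrank_ker_add_one_of_ne_zero hφ, LinearMap.ker_comp,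
    ← (Submodule.comapSubtypeEquivOfLe (inf_le_left : W ⊓ LinearMap.ker φ ≤ W)).finrank_eq,
    Submodule.comap_inf, Submodule.comap_subtype_self, top_inf_eq]

theorem Submodule.finrank_comap_inr_add_one [FiniteDimensional K N] (e : (K × N) ≃ₗ[K] M)
    (S : Submodule K M) (hS : ∀ c y, e (c, y) ∈ S ↔ e (0, y) ∈ S) :
    finrank K (S.comap (e.toLinearMap ∘ₗ LinearMap.inr K K N)) + 1 = finrank K S := by
  have hS_eq : S = (Submodule.prod ⊤ (S.comap (e.toLinearMap ∘ₗ LinearMap.inr K K N))).map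
      e.toLinearMap := by
    ext x
    obtain ⟨⟨c, y⟩, rfl⟩ := e.surjective x
    simp [Submodule.mem_map_equiv, hS c y]
  conv_rhs => rw [hS_eq, LinearEquiv.finrank_map_eq, Submodule.finrank_prod, finrank_top,
    finrank_self, add_comm]

end LinearAlgebra

section FinTuples

variable (R : Type*) {M : Type*} [Semiring R] [AddCommMonoid M] [Module R M]

def Fin.appendLinearEquiv (a b : ℕ) : ((Fin a → M) × (Fin b → M)) ≃ₗ[R] (Fin (a + b) → M) where
  toFun p := Fin.append p.1 p.2
  invFun x := (fun i => x (Fin.castAdd b i), fun j => x (Fin.natAdd a j))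
  map_add' p q := by ext i; refine Fin.addCases (fun j => ?_) (fun j => ?_) i <;> simp
  map_smul' c p := by ext i; refine Fin.addCases (fun j => ?_) (fun j => ?_) i <;> simp
  left_inv p := by simp
  right_inv x := Fin.append_castAdd_natAdd

def Fin.oneAddLinearEquiv (m : ℕ) : (M × (Fin m → M)) ≃ₗ[R] (Fin (1 + m) → M) :=
  ((LinearEquiv.funUnique (Fin 1) R M).symm.prodCongr (LinearEquiv.refl R _)).trans
    (Fin.appendLinearEquiv R 1 m)

def Fin.oneAddAddLinearEquiv (a b : ℕ) :
    (M × (Fin a → M) × (Fin b → M)) ≃ₗ[R] (Fin (1 + a + b) → M) :=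
  (LinearEquiv.prodAssoc R M _ _).symm.trans
    (((Fin.oneAddLinearEquiv R a).prodCongr (LinearEquiv.refl R _)).trans
      (Fin.appendLinearEquiv R (1 + a) b))

variable {R}

theorem List.ofFn_appendLinearEquiv {a b : ℕ} (y : Fin a → M) (z : Fin b → M) :
    List.ofFn (Fin.appendLinearEquiv R a b (y, z)) = List.ofFn y ++ List.ofFn z :=
  List.ofFn_fin_append y z

theorem List.ofFn_oneAddLinearEquiv {m : ℕ} (c : M) (y : Fin m → M) :
    List.ofFn (Fin.oneAddLinearEquiv R m (c, y)) = c :: List.ofFn y := by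
  simp [Fin.oneAddLinearEquiv, List.ofFn_appendLinearEquiv]

theorem List.ofFn_oneAddAddLinearEquiv {a b : ℕ} (c : M) (y : Fin a → M) (z : Fin b → M) :
    List.ofFn (Fin.oneAddAddLinearEquiv R a b (c, y, z)) = c :: (List.ofFn y ++ List.ofFn z) := by
  change List.ofFn (Fin.appendLinearEquiv R (1 + a) b (Fin.oneAddLinearEquiv R a (c, y), z)) = _
  rw [List.ofFn_appendLinearEquiv, List.ofFn_oneAddLinearEquiv, List.cons_append]

end FinTuples

theorem UTree.leaves_eq_ie_add_one (u : UTree) : u.leaves = u.ie + 1 := by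
  induction u with
  | leaf => rfl
  | node l r ihl ihr => simp only [UTree.leaves, UTree.ie, ihl, ihr]; omega

namespace PTree

open List

theorem leaves_pos (t : PTree) : 0 < t.leaves := by
  induction t with
  | stump u => simp [PTree.leaves, UTree.leaves_eq_ie_add_one]
  | node l r ihl ihr => simp only [PTree.leaves]; omega

theorem okI_cons_iff_okI_cons (t : PTree) (a b : ℝ) (d : List ℝ) :
    t.okI (a :: d) ↔ t.okI (b :: d) := by
  cases t <;> rfl

section Node

variable {l r : PTree} {dl : List ℝ} (c : ℝ) (dr : List ℝ)

theorem psum_node_cons_append (h : dl.length = l.te) :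
    (node l r).psum (c :: (dl ++ dr)) = c + l.psum dl + r.psum dr := by
  simp only [PTree.psum, headI_cons, tail_cons, take_left' h, drop_left' h]

theorem okI_node_cons_append (h : dl.length = l.te) :
    (node l r).okI (c :: (dl ++ dr)) ↔
      (r.leaves : ℝ) * l.psum dl = l.leaves * r.psum dr ∧ l.okI dl ∧ r.okI dr := by
  simp only [PTree.okI, tail_cons, take_left' h, drop_left' h]

end Node

noncomputable def nodeEquiv (l r : PTree) :
    (ℝ × (Fin l.te → ℝ) × (Fin r.te → ℝ)) ≃ₗ[ℝ] (Fin (node l r).te → ℝ) :=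
  Fin.oneAddAddLinearEquiv ℝ l.te r.te

theorem ofFn_nodeEquiv {l r : PTree} (c : ℝ) (y : Fin l.te → ℝ) (z : Fin r.te → ℝ) :
    ofFn (nodeEquiv l r (c, y, z)) = c :: (ofFn y ++ ofFn z) :=
  ofFn_oneAddAddLinearEquiv c y z

noncomputable def rootEquiv : (t : PTree) → (ℝ × (Fin t.k → ℝ)) ≃ₗ[ℝ] (Fin t.te → ℝ)
  | .stump u => Fin.oneAddLinearEquiv ℝ u.ie
  | .node l r =>
    ((LinearEquiv.refl ℝ ℝ).prodCongr (Fin.appendLinearEquiv ℝ l.te r.te).symm).trans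
      (nodeEquiv l r)

theorem ofFn_rootEquiv (t : PTree) (c : ℝ) (y : Fin t.k → ℝ) :
    ofFn (t.rootEquiv (c, y)) = c :: ofFn y := by
  cases t with
  | stump u => exact ofFn_oneAddLinearEquiv c y
  | node l r =>
    obtain ⟨⟨y, z⟩, rfl⟩ := (Fin.appendLinearEquiv ℝ l.te r.te).surjective y
    change ofFn (nodeEquiv l r (c, (Fin.appendLinearEquiv ℝ l.te r.te).symm _)) = _
    rw [LinearEquiv.symm_apply_apply, ofFn_nodeEquiv]
    exact congrArg (c :: ·) (ofFn_appendLinearEquiv y z).symm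

theorem exists_okI_psum_eq_mem_Ioc (t : PTree) {s : ℝ} (hs : 0 < s) :
    ∃ x : Fin t.te → ℝ,
      t.okI (ofFn x) ∧ t.psum (ofFn x) = s ∧ ∀ a ∈ ofFn x, a ∈ Set.Ioc 0 s := by
  induction t generalizing s with
  | stump u =>
    refine ⟨(stump u).rootEquiv (s, fun _ => s), trivial, ?_, ?_⟩ <;>
      simp [ofFn_rootEquiv, PTree.psum, hs]
  | node l r ihl ihr =>
    have hL : (0 : ℝ) < l.leaves := mod_cast l.leaves_pos
    have hR : (0 : ℝ) < r.leaves := mod_cast r.leaves_pos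
    have hshare : ∀ {a b : ℝ}, 0 < a → 0 < b →
        0 < s / 2 * (a / (a + b)) ∧ s / 2 * (a / (a + b)) ≤ s := fun {a b} ha hb =>
      ⟨by positivity, by
        have : a / (a + b) ≤ 1 := (div_le_one (by positivity)).2 (by linarith)
        nlinarith⟩
    obtain ⟨xl, hokl, hpsl, hposl⟩ := ihl (hshare hL hR).1
    obtain ⟨xr, hokr, hpsr, hposr⟩ := ihr (hshare hR hL).1
    refine ⟨nodeEquiv l r (s / 2, xl, xr), ?_, ?_, ?_⟩
    all_goals rw [ofFn_nodeEquiv]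
    · refine (okI_node_cons_append _ _ length_ofFn).2 ⟨?_, hokl, hokr⟩
      rw [hpsl, hpsr]
      ring
    · rw [psum_node_cons_append _ _ length_ofFn, hpsl, hpsr]
      field_simp
      ring
    · simp only [mem_cons, mem_append, Set.mem_Ioc]
      rintro a (rfl | ha | ha)
      · constructor <;> linarith
      · exact ⟨(hposl a ha).1, (hposl a ha).2.trans (hshare hL hR).2⟩
      · exact ⟨(hposr a ha).1, (hposr a ha).2.trans (hshare hR hL).2⟩

noncomputable def psumLinear : (t : PTree) → (Fin t.te → ℝ) →ₗ[ℝ] ℝ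
  | .stump u => LinearMap.fst ℝ ℝ _ ∘ₗ (stump u).rootEquiv.symm.toLinearMap
  | .node l r =>
    (LinearMap.fst ℝ ℝ _ + l.psumLinear ∘ₗ LinearMap.fst ℝ _ _ ∘ₗ LinearMap.snd ℝ ℝ _ +
        r.psumLinear ∘ₗ LinearMap.snd ℝ _ _ ∘ₗ LinearMap.snd ℝ ℝ _) ∘ₗ
      (nodeEquiv l r).symm.toLinearMap

theorem psumLinear_apply (t : PTree) (x : Fin t.te → ℝ) :
    t.psumLinear x = t.psum (ofFn x) := by
  induction t with
  | stump u =>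
    obtain ⟨⟨c, y⟩, rfl⟩ := (stump u).rootEquiv.surjective x
    simp [psumLinear, ofFn_rootEquiv, PTree.psum]
  | node l r ihl ihr =>
    obtain ⟨⟨c, y, z⟩, rfl⟩ := (nodeEquiv l r).surjective x
    simp [psumLinear, ofFn_nodeEquiv, psum_node_cons_append, ihl, ihr]

noncomputable def balance (l r : PTree) : ((Fin l.te → ℝ) × (Fin r.te → ℝ)) →ₗ[ℝ] ℝ :=
  (r.leaves : ℝ) • (l.psumLinear ∘ₗ LinearMap.fst ℝ _ _) -
    (l.leaves : ℝ) • (r.psumLinear ∘ₗ LinearMap.snd ℝ _ _)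

noncomputable def solutionSpace : (t : PTree) → Submodule ℝ (Fin t.te → ℝ)
  | .stump _ => ⊤
  | .node l r =>
    (Submodule.prod ⊤ (l.solutionSpace.prod r.solutionSpace ⊓ LinearMap.ker (balance l r))).map
      (nodeEquiv l r).toLinearMap

theorem mem_solutionSpace (t : PTree) (x : Fin t.te → ℝ) :
    x ∈ t.solutionSpace ↔ t.okI (ofFn x) := by
  induction t with
  | stump u => exact iff_of_true Submodule.mem_top trivial
  | node l r ihl ihr =>
    obtain ⟨⟨c, y, z⟩, rfl⟩ := (nodeEquiv l r).surjective x
    rw [ofFn_nodeEquiv, okI_node_cons_append _ _ length_ofFn, ← psumLinear_apply,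
      ← psumLinear_apply, ← ihl, ← ihr]
    simp only [solutionSpace, balance, Submodule.mem_map_equiv, LinearEquiv.symm_apply_apply,
      Submodule.mem_prod, Submodule.mem_top, Submodule.mem_inf, LinearMap.mem_ker,
      LinearMap.sub_apply, LinearMap.smul_apply, LinearMap.coe_comp, LinearMap.coe_fst,
      LinearMap.coe_snd, Function.comp_apply, smul_eq_mul, sub_eq_zero, true_and]
    tauto

theorem exists_mem_solutionSpace_psumLinear_ne_zero (t : PTree) :
    ∃ x ∈ t.solutionSpace, t.psumLinear x ≠ 0 := by
  obtain ⟨x, hok, hpsum, -⟩ := t.exists_okI_psum_eq_mem_Ioc one_pos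
  exact ⟨x, (t.mem_solutionSpace x).2 hok, by rw [psumLinear_apply, hpsum]; exact one_ne_zero⟩

theorem finrank_solutionSpace (t : PTree) : finrank ℝ t.solutionSpace = t.leaves := by
  induction t with
  | stump u =>
    rw [solutionSpace, finrank_top, finrank_fin_fun, PTree.te, PTree.leaves,
      UTree.leaves_eq_ie_add_one, add_comm]
  | node l r ihl ihr =>
    obtain ⟨x, hx, hpsum⟩ := l.exists_mem_solutionSpace_psumLinear_ne_zero
    have hbal := Submodule.finrank_inf_ker_add_one (w := (x, 0)) (φ := balance l r)
      (Submodule.mem_prod.2 ⟨hx, r.solutionSpace.zero_mem⟩)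
      (by simpa [balance] using ⟨r.leaves_pos.ne', hpsum⟩)
    rw [Submodule.finrank_prod, ihl, ihr] at hbal
    rw [solutionSpace, LinearEquiv.finrank_map_eq, Submodule.finrank_prod, finrank_top,
      finrank_self, PTree.leaves]
    omega

end PTree

/-- For a painted binary tree `t` with `n` leaves and `k` interior edges, the
solution space of the level-tree constraint equations is a linear subspace of
`ℝ^k` of dimension `n - 1`, and there is a solution all of whose coordinates
lie in `(0, 1/2]`; hence its intersection with `[0,1]^k` is an
`(n-1)`-dimensional polytope. -/
theorem level_tree_solution_space (t : PTree) (n : ℕ) (h : t.leaves = n) :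
    (∃ V : Submodule ℝ (Fin t.k → ℝ),
        (∀ x : Fin t.k → ℝ, x ∈ V ↔ t.ok (List.ofFn x)) ∧
          Module.finrank ℝ V = n - 1) ∧
      ∃ x : Fin t.k → ℝ, t.ok (List.ofFn x) ∧
        ∀ i, x i ∈ Set.Ioc (0 : ℝ) (1 / 2) := by
  subst h
  have hroot : ∀ c y,
      t.rootEquiv (c, y) ∈ t.solutionSpace ↔ t.rootEquiv (0, y) ∈ t.solutionSpace := by
    simp only [PTree.mem_solutionSpace, PTree.ofFn_rootEquiv, PTree.okI_cons_iff_okI_cons _ _ 0,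
      implies_true]
  have hdim := Submodule.finrank_comap_inr_add_one t.rootEquiv t.solutionSpace hroot
  rw [PTree.finrank_solutionSpace] at hdim
  refine ⟨⟨t.solutionSpace.comap (t.rootEquiv.toLinearMap ∘ₗ LinearMap.inr ℝ ℝ _),
    fun x => ?_, by omega⟩, ?_⟩
  · simp [PTree.mem_solutionSpace, PTree.ofFn_rootEquiv, PTree.ok]
  obtain ⟨x, hok, -, hpos⟩ := t.exists_okI_psum_eq_mem_Ioc (s := 1 / 2) (by norm_num)
  obtain ⟨⟨c, y⟩, rfl⟩ := t.rootEquiv.surjective x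
  rw [PTree.ofFn_rootEquiv] at hok hpos
  exact ⟨y, (t.okI_cons_iff_okI_cons _ _ _).1 hok, fun i => hpos _ (by simp)⟩
end

section
/- Let q ∈ (0,1), positive weights w_0,…,w_{n−1}, and a composition r_1+⋯+r_t = n with t ≥ 2. For any n-leaved painted binary tree T that is a refinement of the upper tree u(t; r_1,…,r_t), the weighted point M^w_q(T) satisfies x_{r_1} + x_{r_1+r_2} + ⋯ + x_{r_1+⋯+r_{t−1}} = Σ_{1 ≤ i < j ≤ t} R_i R_j, where R_i is the total weight of the i-th block of leaves; and for every n-leaved painted binary tree T, x_{r_1} + ⋯ + x_{r_1+⋯+r_{t−1}} ≤ Σ_{1 ≤ i < j ≤ t} R_i R_j, with equality iff T refines u(t; r_1,…,r_t). -/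
/-!
Induct on the tree. Let the root have `m` leaves on its left. Either `m` is one of the cut
positions `r₁ + ⋯ + r_k`, or it falls strictly inside a block, splitting its weight as
`R_k = a + b`. In the first case the root coordinate `L·R` is one of the summands, and
`Σ_{i<j} R_i R_j` is the sum of the corresponding quantities for the two subtrees plus `L·R`,
so the inequality and its equality case pass to the subtrees. In the second case the root is
not counted, the subtrees see compositions ending in `a` and starting with `b`, and
`Σ_{i<j} R_i R_j` exceeds the sum of their bounds by `L·R - a·b`, which is positive as soon as
there are two blocks. An unpainted subtree has all its coordinates scaled by `q < 1`, hence
stays strictly below the bound.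
-/

/-- Unpainted planar binary trees with real weights on the leaves. -/
inductive WU : Type
  | leaf : ℝ → WU
  | node : WU → WU → WU

/-- Painted binary trees with weighted leaves. -/
inductive WP : Type
  | stump : WU → WP
  | node : WP → WP → WP

/-- Leaf weights of an unpainted tree, left to right. -/
def WU.leafList : WU → List ℝ
  | .leaf w => [w]
  | .node l r => l.leafList ++ r.leafList

/-- Total weight of an unpainted tree. -/
noncomputable def WU.wsum (u : WU) : ℝ := u.leafList.sum

/-- Leaf weights of a painted tree, left to right. -/
def WP.leafList : WP → List ℝ
  | .stump u => u.leafList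
  | .node l r => l.leafList ++ r.leafList

/-- Total weight of a painted tree. -/
noncomputable def WP.wsum (t : WP) : ℝ := t.leafList.sum

/-- In-order coordinates of unpainted (type 1) nodes: `q · L_i · R_i`. -/
noncomputable def WU.coords (q : ℝ) : WU → List ℝ
  | .leaf _ => []
  | .node l r => l.coords q ++ [q * l.wsum * r.wsum] ++ r.coords q

/-- In-order coordinates `x_1, …, x_{n-1}` of the weighted point `M^w_q(T)`:
`q · L_i · R_i` at unpainted nodes and `L_i · R_i` at painted nodes. -/
noncomputable def WP.coords (q : ℝ) : WP → List ℝ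
  | .stump u => u.coords q
  | .node l r => l.coords q ++ [l.wsum * r.wsum] ++ r.coords q

/-- `pairSum [R_1, …, R_t] = Σ_{1 ≤ i < j ≤ t} R_i · R_j`. -/
noncomputable def pairSum : List ℝ → ℝ
  | [] => 0
  | w :: ws => w * ws.sum + pairSum ws

/-- The block weight sums `R_1, …, R_t`: `splitSums [r_1,…,r_t] ws` splits the
weight list `ws` into consecutive blocks of sizes `r_1, …, r_t` and records
the sum of each block. -/
noncomputable def splitSums : List ℕ → List ℝ → List ℝ
  | [], _ => []
  | r :: rs, ws => (ws.take r).sum :: splitSums rs (ws.drop r)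

/-- `PGraft T Ts`: the painted tree `T` is obtained by grafting the painted
trees in the list `Ts` (in order) onto the leaves of a fully painted binary
tree with `Ts.length` leaves. -/
inductive PGraft : WP → List WP → Prop
  | leaf (t : WP) : PGraft t [t]
  | node {l r : WP} {L R : List WP} :
      PGraft l L → PGraft r R → PGraft (WP.node l r) (L ++ R)

namespace List

theorem exists_eq_append_or_eq_split (rs : List ℕ) {m : ℕ} (hm : m ≤ rs.sum) :
    (∃ L R, rs = L ++ R ∧ L.sum = m) ∨
      ∃ C a b D, rs = C ++ (a + b) :: D ∧ C.sum + a = m ∧ 0 < a ∧ 0 < b := by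
  induction rs generalizing m with
  | nil => exact .inl ⟨[], [], rfl, (Nat.le_zero.mp hm).symm⟩
  | cons r rs ih =>
    rcases Nat.eq_zero_or_pos m with rfl | hm0
    · exact .inl ⟨[], r :: rs, rfl, rfl⟩
    rcases lt_or_ge m r with hmr | hrm
    · exact .inr ⟨[], m, r - m, rs, by rw [Nat.add_sub_cancel' hmr.le]; rfl, Nat.zero_add m, hm0,
        by omega⟩
    rcases ih (m := m - r) (by simp only [sum_cons] at hm; omega) with
      ⟨L, R, rfl, hL⟩ | ⟨C, a, b, D, rfl, hC, ha, hb⟩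
    · exact .inl ⟨r :: L, R, rfl, by simp only [sum_cons]; omega⟩
    · exact .inr ⟨r :: C, a, b, D, rfl, by simp only [sum_cons]; omega, ha, hb⟩

theorem append_ne_split {L R C D : List ℕ} {a b : ℕ} (ha : 0 < a) (hb : 0 < b)
    (h : L ++ R = C ++ (a + b) :: D) : L.sum ≠ C.sum + a := by
  rcases append_eq_append_iff.mp h with ⟨E, rfl, -⟩ | ⟨E, rfl, hE⟩
  · simp only [sum_append, ne_eq]; omega
  · cases E with
    | nil => simp only [append_nil, ne_eq, Nat.left_eq_add]; omega
    | cons e E =>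
      cases hE
      simp only [sum_append, sum_cons, ne_eq, Nat.add_left_cancel_iff]
      omega

theorem eq_of_append_eq_append_of_sum_eq {L R L' R' : List ℕ} (hpos : ∀ r ∈ L ++ R, 0 < r)
    (h : L ++ R = L' ++ R') (hsum : L.sum = L'.sum) : L = L' ∧ R = R' := by
  have nil_of_sum_eq_zero : ∀ E : List ℕ, (∀ r ∈ E, 0 < r) → E.sum = 0 → E = [] :=
    fun E hE h0 => eq_nil_iff_forall_not_mem.mpr fun r hr =>
      (hE r hr).ne' (sum_eq_zero_iff.mp h0 r hr)
  rcases append_eq_append_iff.mp h with ⟨E, rfl, hE⟩ | ⟨E, rfl, hE⟩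
  · obtain rfl : E = [] := nil_of_sum_eq_zero E (fun r hr => hpos r (by simp [hE, hr]))
      (by simpa using hsum)
    simpa using hE
  · obtain rfl : E = [] := nil_of_sum_eq_zero E (fun r hr => hpos r (by simp [hr]))
      (by simpa using hsum)
    simpa using hE.symm

end List

/-- `cutSum xs [r₁, …, r_t] = x_{r₁} + x_{r₁+r₂} + ⋯ + x_{r₁+⋯+r_{t-1}}`, where `x_i` is the
entry of `xs` at (0-based) index `i - 1`. -/
noncomputable def cutSum : List ℝ → List ℕ → ℝ
  | _, [] => 0
  | _, [_] => 0
  | xs, r :: s :: rs => xs.getD (r - 1) 0 + cutSum (xs.drop r) (s :: rs)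

theorem cutSum_cons_of_ne_nil (xs : List ℝ) (r : ℕ) {rs : List ℕ} (h : rs ≠ []) :
    cutSum xs (r :: rs) = xs.getD (r - 1) 0 + cutSum (xs.drop r) rs := by
  obtain ⟨s, rs, rfl⟩ := List.exists_cons_of_ne_nil h
  rfl

theorem cutSum_nil_left (rs : List ℕ) : cutSum [] rs = 0 := by
  induction rs with
  | nil => rfl
  | cons r rs ih =>
    cases rs with
    | nil => rfl
    | cons s rs => simpa [cutSum] using ih

theorem sum_range_getD_eq_cutSum (xs : List ℝ) {rs : List ℕ} (hr : ∀ r ∈ rs, 0 < r) :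
    ∑ i ∈ Finset.range (rs.length - 1), xs.getD ((rs.take (i + 1)).sum - 1) 0 = cutSum xs rs := by
  induction rs generalizing xs with
  | nil => rfl
  | cons r rs ih =>
    rcases eq_or_ne rs [] with rfl | hne
    · rfl
    have hlen : (r :: rs).length - 1 = (rs.length - 1) + 1 := by
      have := List.length_pos_iff.mpr hne
      simp only [List.length_cons, add_tsub_cancel_right]
      omega
    have hs : ∀ i, 0 < (rs.take (i + 1)).sum := fun i => by
      obtain ⟨s, rs, rfl⟩ := List.exists_cons_of_ne_nil hne
      have := hr s (by simp)
      simp only [List.take_succ_cons, List.sum_cons]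
      omega
    rw [hlen, Finset.sum_range_succ', cutSum_cons_of_ne_nil _ _ hne,
      ← ih (xs.drop r) fun s hs => hr s (.tail _ hs), add_comm]
    congr 1
    refine Finset.sum_congr rfl fun i _ => ?_
    simp only [List.take_succ_cons, List.sum_cons, List.getD_eq_getElem?_getD,
      List.getElem?_drop]
    congr 3
    have := hs i; omega

theorem cutSum_append_cons_of_cut (A B : List ℝ) (x : ℝ) {L R : List ℕ}
    (hL : ∀ r ∈ L, 0 < r) (hR : R ≠ []) (hsum : L.sum = A.length + 1) :
    cutSum (A ++ x :: B) (L ++ R) = cutSum A L + x + cutSum B R := by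
  induction L generalizing A with
  | nil => simp at hsum
  | cons r L ih =>
    rw [List.cons_append, cutSum_cons_of_ne_nil _ _ (by simp [hR])]
    rcases eq_or_ne L [] with rfl | hL'
    · obtain rfl : r = A.length + 1 := by simpa using hsum
      simp [cutSum]
    have hLpos : 0 < L.sum := by
      obtain ⟨s, L, rfl⟩ := List.exists_cons_of_ne_nil hL'
      have := hL s (by simp)
      simp only [List.sum_cons]
      omega
    have hrA : r ≤ A.length := by simp only [List.sum_cons] at hsum; omega
    have hr : 0 < r := hL r (by simp)
    rw [cutSum_cons_of_ne_nil _ _ hL', List.getD_append _ _ _ _ (by omega),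
      List.drop_append_of_le_length hrA,
      ih _ (fun s hs => hL s (.tail _ hs))
        (by simp only [List.sum_cons, List.length_drop] at hsum ⊢; omega)]
    ring

theorem cutSum_append_cons_of_split (A B : List ℝ) (x : ℝ) {C D : List ℕ} {a b : ℕ}
    (hC : ∀ r ∈ C, 0 < r) (ha : 0 < a) (hb : 0 < b) (hsum : C.sum + a = A.length + 1) :
    cutSum (A ++ x :: B) (C ++ (a + b) :: D) = cutSum A (C ++ [a]) + cutSum B (b :: D) := by
  induction C generalizing A with
  | nil =>
    obtain rfl : a = A.length + 1 := by simpa using hsum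
    rcases eq_or_ne D [] with rfl | hD
    · simp [cutSum]
    have hget : (A ++ x :: B).getD (A.length + 1 + b - 1) 0 = B.getD (b - 1) 0 := by
      rw [List.getD_append_right _ _ _ _ (by omega),
        show A.length + 1 + b - 1 - A.length = (b - 1) + 1 by omega]
      rfl
    have hdrop : (A ++ x :: B).drop (A.length + 1 + b) = B.drop b := by
      rw [List.drop_append, List.drop_eq_nil_of_le (by omega), List.nil_append,
        show A.length + 1 + b - A.length = b + 1 by omega]
      rfl
    rw [List.nil_append, cutSum_cons_of_ne_nil _ _ hD, cutSum_cons_of_ne_nil _ _ hD, hget, hdrop]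
    simp [cutSum]
  | cons r C ih =>
    have hr : 0 < r := hC r (by simp)
    have hrA : r ≤ A.length := by simp only [List.sum_cons] at hsum; omega
    rw [List.cons_append, List.cons_append, cutSum_cons_of_ne_nil _ _ (by simp),
      cutSum_cons_of_ne_nil _ _ (by simp), List.getD_append _ _ _ _ (by omega),
      List.drop_append_of_le_length hrA,
      ih _ (fun s hs => hC s (.tail _ hs))
        (by simp only [List.sum_cons, List.length_drop] at hsum ⊢; omega)]
    ring

theorem pairSum_append (A B : List ℝ) :
    pairSum (A ++ B) = pairSum A + pairSum B + A.sum * B.sum := by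
  induction A with
  | nil => simp [pairSum]
  | cons a A ih => simp only [List.cons_append, pairSum, ih, List.sum_cons, List.sum_append]; ring

theorem pairSum_nonneg {l : List ℝ} (h : ∀ x ∈ l, 0 ≤ x) : 0 ≤ pairSum l := by
  induction l with
  | nil => simp [pairSum]
  | cons a l ih =>
    have := h a (by simp)
    have := List.sum_nonneg fun x hx => h x (.tail _ hx)
    have := ih fun x hx => h x (.tail _ hx)
    simp only [pairSum]; positivity

theorem pairSum_pos {l : List ℝ} (h : ∀ x ∈ l, 0 < x) (hl : 2 ≤ l.length) : 0 < pairSum l := by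
  obtain ⟨a, l, rfl⟩ := List.exists_cons_of_length_pos (by omega : 0 < l.length)
  have := h a (by simp)
  have := List.sum_pos l (fun x hx => h x (.tail _ hx))
    (List.ne_nil_of_length_pos (by simp only [List.length_cons] at hl; omega))
  have := pairSum_nonneg fun x hx => (h x (.tail _ hx)).le
  simp only [pairSum]; positivity

theorem pairSum_merge (S T : List ℝ) (α β : ℝ) :
    pairSum (S ++ (α + β) :: T) =
      pairSum (S ++ [α]) + pairSum (β :: T) + (S.sum + α) * (β + T.sum) - α * β := by
  simp only [pairSum_append, pairSum, List.sum_cons, List.sum_nil]; ring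

theorem length_splitSums (rs : List ℕ) (ws : List ℝ) : (splitSums rs ws).length = rs.length := by
  induction rs generalizing ws with
  | nil => rfl
  | cons r rs ih => simp [splitSums, ih]

theorem splitSums_append (L R : List ℕ) (ws : List ℝ) :
    splitSums (L ++ R) ws = splitSums L (ws.take L.sum) ++ splitSums R (ws.drop L.sum) := by
  induction L generalizing ws with
  | nil => simp [splitSums]
  | cons r L ih =>
    simp [splitSums, ih, List.take_take, List.drop_take, List.drop_drop]

theorem sum_splitSums {rs : List ℕ} {ws : List ℝ} (h : rs.sum = ws.length) :
    (splitSums rs ws).sum = ws.sum := by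
  induction rs generalizing ws with
  | nil => simp [splitSums, List.eq_nil_of_length_eq_zero h.symm]
  | cons r rs ih =>
    rw [splitSums, List.sum_cons, ih (by simp only [List.sum_cons, List.length_drop] at h ⊢; omega),
      List.sum_take_add_sum_drop]

theorem splitSums_pos {rs : List ℕ} {ws : List ℝ} (hr : ∀ r ∈ rs, 0 < r)
    (h : rs.sum = ws.length) (hw : ∀ w ∈ ws, 0 < w) : ∀ x ∈ splitSums rs ws, 0 < x := by
  induction rs generalizing ws with
  | nil => simp [splitSums]
  | cons r rs ih =>
    have hr0 := hr r (by simp)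
    simp only [splitSums, List.mem_cons, forall_eq_or_imp]
    refine ⟨List.sum_pos _ (fun w hw' => hw w (List.mem_of_mem_take hw')) ?_,
      ih (fun s hs => hr s (.tail _ hs))
        (by simp only [List.sum_cons, List.length_drop] at h ⊢; omega)
        fun w hw' => hw w (List.mem_of_mem_drop hw')⟩
    exact List.ne_nil_of_length_pos
      (by simp only [List.sum_cons, List.length_take, lt_inf_iff] at h ⊢; omega)

theorem pairSum_splitSums_append {L R : List ℕ} {wsL wsR : List ℝ}
    (hL : L.sum = wsL.length) (hR : R.sum = wsR.length) :
    pairSum (splitSums (L ++ R) (wsL ++ wsR)) =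
      pairSum (splitSums L wsL) + pairSum (splitSums R wsR) + wsL.sum * wsR.sum := by
  rw [splitSums_append, hL, List.take_left, List.drop_left, pairSum_append, sum_splitSums hL,
    sum_splitSums hR]

theorem pairSum_splitSums_split {C D : List ℕ} {a b : ℕ} {wsL wsR : List ℝ}
    (hC : C.sum + a = wsL.length) (hD : b + D.sum = wsR.length) :
    pairSum (splitSums (C ++ (a + b) :: D) (wsL ++ wsR)) =
      pairSum (splitSums (C ++ [a]) wsL) + pairSum (splitSums (b :: D) wsR) +
        wsL.sum * wsR.sum - (wsL.drop C.sum).sum * (wsR.take b).sum := by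
  have hX : (wsL.drop C.sum).length = a := by simp only [List.length_drop]; omega
  have hP : C.sum = (wsL.take C.sum).length := by simp only [List.length_take, left_eq_inf]; omega
  have hQ : D.sum = (wsR.drop b).length := by simp only [List.length_drop]; omega
  have hmerged : splitSums (C ++ (a + b) :: D) (wsL ++ wsR) =
      splitSums C (wsL.take C.sum) ++
        ((wsL.drop C.sum).sum + (wsR.take b).sum) :: splitSums D (wsR.drop b) := by
    rw [splitSums_append, List.take_append_of_le_length (by omega),
      List.drop_append_of_le_length (by omega), splitSums, List.take_append, List.drop_append,
      hX, Nat.add_sub_cancel_left, List.take_of_length_le (l := wsL.drop C.sum) (by omega),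
      List.drop_of_length_le (l := wsL.drop C.sum) (by omega), List.sum_append, List.nil_append]
  have hleft :
      splitSums (C ++ [a]) wsL = splitSums C (wsL.take C.sum) ++ [(wsL.drop C.sum).sum] := by
    rw [splitSums_append, splitSums, splitSums, List.take_of_length_le hX.le]
  rw [hmerged, hleft, splitSums, pairSum_merge, sum_splitSums hP, sum_splitSums hQ,
    ← List.sum_take_add_sum_drop wsL C.sum, ← List.sum_take_add_sum_drop wsR b]

theorem WU.length_coords (q : ℝ) (u : WU) : (u.coords q).length + 1 = u.leafList.length := by
  induction u with
  | leaf => rfl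
  | node l r ihl ihr =>
    simp only [WU.coords, WU.leafList, List.length_append, List.length_singleton]
    omega

theorem WP.length_coords (q : ℝ) (T : WP) : (T.coords q).length + 1 = T.leafList.length := by
  induction T with
  | stump u => exact u.length_coords q
  | node l r ihl ihr =>
    simp only [WP.coords, WP.leafList, List.length_append, List.length_singleton]
    omega

theorem WP.leafList_length_pos (T : WP) : 0 < T.leafList.length := by
  have := T.length_coords 0; omega

/-- `T` refines the upper tree `u(t; r₁, …, r_t)`. -/
def WP.Refines (T : WP) (rs : List ℕ) : Prop :=
  ∃ Ts : List WP, PGraft T Ts ∧ Ts.map (fun u => u.leafList.length) = rs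

theorem PGraft.sum_map_length {T : WP} {Ts : List WP} (h : PGraft T Ts) :
    (Ts.map fun u => u.leafList.length).sum = T.leafList.length := by
  induction h with
  | leaf => simp
  | node _ _ ihl ihr => simp [ihl, ihr, WP.leafList]

theorem WP.Refines.sum_eq {T : WP} {rs : List ℕ} (h : T.Refines rs) :
    rs.sum = T.leafList.length := by
  obtain ⟨Ts, hT, rfl⟩ := h
  exact hT.sum_map_length

theorem WP.refines_singleton (T : WP) : T.Refines [T.leafList.length] :=
  ⟨[T], .leaf T, rfl⟩

theorem WP.refines_stump_iff {u : WU} {rs : List ℕ} :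
    (WP.stump u).Refines rs ↔ rs = [u.leafList.length] := by
  refine ⟨fun ⟨Ts, hT, hrs⟩ => ?_, fun h => h ▸ refines_singleton _⟩
  cases hT
  exact hrs.symm

theorem WP.refines_node_iff {l r : WP} {rs : List ℕ} :
    (l.node r).Refines rs ↔
      rs = [(l.node r).leafList.length] ∨ ∃ L R, rs = L ++ R ∧ l.Refines L ∧ r.Refines R := by
  constructor
  · rintro ⟨Ts, hT, rfl⟩
    cases hT with
    | leaf => exact .inl rfl
    | node hl hr => exact .inr ⟨_, _, List.map_append .., ⟨_, hl, rfl⟩, ⟨_, hr, rfl⟩⟩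
  · rintro (rfl | ⟨L, R, rfl, ⟨Ls, hl, rfl⟩, ⟨Rs, hr, rfl⟩⟩)
    · exact refines_singleton _
    · exact ⟨Ls ++ Rs, .node hl hr, List.map_append ..⟩

theorem WP.refines_node_append_iff {l r : WP} {L R : List ℕ} (hpos : ∀ s ∈ L ++ R, 0 < s)
    (hL : L.sum = l.leafList.length) (hR : R.sum = r.leafList.length) :
    (l.node r).Refines (L ++ R) ↔ l.Refines L ∧ r.Refines R := by
  refine ⟨fun h => ?_, fun ⟨hl, hr⟩ => refines_node_iff.mpr (.inr ⟨L, R, rfl, hl, hr⟩)⟩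
  rcases refines_node_iff.mp h with h | ⟨L', R', h, hl, hr⟩
  · have := l.leafList_length_pos
    have := r.leafList_length_pos
    rcases List.append_eq_singleton_iff.mp h with ⟨rfl, -⟩ | ⟨-, rfl⟩ <;>
      simp only [List.sum_nil] at hL hR <;> omega
  · obtain ⟨rfl, rfl⟩ := List.eq_of_append_eq_append_of_sum_eq hpos h (hL.trans hl.sum_eq.symm)
    exact ⟨hl, hr⟩

theorem sum_drop_mul_sum_take_le {l l' : List ℝ} (hl : ∀ w ∈ l, 0 ≤ w) (hl' : ∀ w ∈ l', 0 ≤ w)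
    (i j : ℕ) : (l.drop i).sum * (l'.take j).sum ≤ l.sum * l'.sum :=
  mul_le_mul ((List.drop_sublist i l).sum_le_sum hl) ((List.take_sublist j l').sum_le_sum hl')
    (List.sum_nonneg fun w hw => hl' w (List.mem_of_mem_take hw)) (List.sum_nonneg hl)

theorem sum_drop_mul_sum_take_lt {l l' : List ℝ} (hl : ∀ w ∈ l, 0 < w) (hl' : ∀ w ∈ l', 0 < w)
    {i j : ℕ} (hi : i < l.length) (hj : 0 < j) (hj' : j ≤ l'.length)
    (hij : 0 < i ∨ j < l'.length) : (l.drop i).sum * (l'.take j).sum < l.sum * l'.sum := by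
  have sum_pos_of_sublist : ∀ {s m : List ℝ}, s.Sublist m → (∀ w ∈ m, 0 < w) →
      0 < s.length → 0 < s.sum := fun hs hm hlen =>
    List.sum_pos _ (fun w hw => hm w (hs.subset hw)) (List.ne_nil_of_length_pos hlen)
  have hX := sum_pos_of_sublist (List.drop_sublist i l) hl
    (by simp only [List.length_drop]; omega)
  have hY := sum_pos_of_sublist (List.take_sublist j l') hl'
    (by simp only [List.length_take]; omega)
  have hP := List.sum_nonneg fun w hw => (hl w (List.mem_of_mem_take (l := l) (i := i) hw)).le
  have hQ := List.sum_nonneg fun w hw => (hl' w (List.mem_of_mem_drop (l := l') (i := j) hw)).le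
  have hPQ : 0 < (l.take i).sum ∨ 0 < (l'.drop j).sum := hij.imp
    (fun h => sum_pos_of_sublist (List.take_sublist i l) hl
      (by simp only [List.length_take]; omega))
    (fun h => sum_pos_of_sublist (List.drop_sublist j l') hl'
      (by simp only [List.length_drop]; omega))
  rw [← List.sum_take_add_sum_drop l i, ← List.sum_take_add_sum_drop l' j]
  rcases hPQ with h | h <;> nlinarith

theorem cutSum_append_cons_le {A B wsL wsR : List ℝ} {x c : ℝ} (hc : 0 ≤ c)
    (hx : x ≤ c * (wsL.sum * wsR.sum)) (hA : A.length + 1 = wsL.length)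
    (hB : B.length + 1 = wsR.length) (hwL : ∀ w ∈ wsL, 0 < w) (hwR : ∀ w ∈ wsR, 0 < w)
    (ihA : ∀ rs : List ℕ, (∀ r ∈ rs, 0 < r) → rs.sum = wsL.length →
      cutSum A rs ≤ c * pairSum (splitSums rs wsL))
    (ihB : ∀ rs : List ℕ, (∀ r ∈ rs, 0 < r) → rs.sum = wsR.length →
      cutSum B rs ≤ c * pairSum (splitSums rs wsR))
    {rs : List ℕ} (hr : ∀ r ∈ rs, 0 < r) (hsum : rs.sum = wsL.length + wsR.length) :
    cutSum (A ++ x :: B) rs ≤ c * pairSum (splitSums rs (wsL ++ wsR)) := by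
  rcases rs.exists_eq_append_or_eq_split (m := wsL.length) (by omega) with
    ⟨L, R, rfl, hL⟩ | ⟨C, a, b, D, rfl, hC, ha, hb⟩
  · have hR : R.sum = wsR.length := by simp only [List.sum_append] at hsum; omega
    rw [cutSum_append_cons_of_cut A B x (fun s hs => hr s (by simp [hs]))
        (by rintro rfl; simp only [List.sum_nil] at hR; omega) (by omega),
      pairSum_splitSums_append hL hR]
    have := ihA L (fun s hs => hr s (by simp [hs])) hL
    have := ihB R (fun s hs => hr s (by simp [hs])) hR
    nlinarith
  · have hD : b + D.sum = wsR.length := by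
      simp only [List.sum_append, List.sum_cons] at hsum; omega
    have hrC : ∀ s ∈ C, 0 < s := fun s hs => hr s (by simp [hs])
    have hrD : ∀ s ∈ D, 0 < s := fun s hs => hr s (by simp [hs])
    rw [cutSum_append_cons_of_split A B x hrC ha hb (by omega), pairSum_splitSums_split hC hD]
    have := ihA (C ++ [a]) (List.forall_mem_append.mpr ⟨hrC, by simpa⟩) (by simpa using hC)
    have := ihB (b :: D) (List.forall_mem_cons.mpr ⟨hb, hrD⟩) hD
    have := sum_drop_mul_sum_take_le (fun w hw => (hwL w hw).le) (fun w hw => (hwR w hw).le)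
      C.sum b
    nlinarith

theorem pairSum_splitSums_nonneg {rs : List ℕ} {ws : List ℝ} (hr : ∀ r ∈ rs, 0 < r)
    (hsum : rs.sum = ws.length) (hw : ∀ w ∈ ws, 0 < w) : 0 ≤ pairSum (splitSums rs ws) :=
  pairSum_nonneg fun x hx => (splitSums_pos hr hsum hw x hx).le

theorem WU.cutSum_coords_le {q : ℝ} (hq : 0 ≤ q) (u : WU) {rs : List ℕ} (hr : ∀ r ∈ rs, 0 < r)
    (hsum : rs.sum = u.leafList.length) (hw : ∀ w ∈ u.leafList, 0 < w) :
    cutSum (u.coords q) rs ≤ q * pairSum (splitSums rs u.leafList) := by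
  induction u generalizing rs with
  | leaf =>
    rw [WU.coords, cutSum_nil_left]
    exact mul_nonneg hq (pairSum_splitSums_nonneg hr hsum hw)
  | node l r ihl ihr =>
    simp only [WU.coords, WU.leafList, List.append_assoc, List.singleton_append] at hsum hw ⊢
    obtain ⟨hwl, hwr⟩ := List.forall_mem_append.mp hw
    exact cutSum_append_cons_le hq (by simp [WU.wsum, mul_assoc]) (l.length_coords q)
      (r.length_coords q) hwl hwr (fun _ hr hsum => ihl hr hsum hwl)
      (fun _ hr hsum => ihr hr hsum hwr) hr (by simpa using hsum)

theorem WP.cutSum_coords_le {q : ℝ} (hq0 : 0 ≤ q) (hq1 : q ≤ 1) (T : WP) {rs : List ℕ}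
    (hr : ∀ r ∈ rs, 0 < r) (hsum : rs.sum = T.leafList.length) (hw : ∀ w ∈ T.leafList, 0 < w) :
    cutSum (T.coords q) rs ≤ pairSum (splitSums rs T.leafList) := by
  induction T generalizing rs with
  | stump u =>
    exact (u.cutSum_coords_le hq0 hr hsum hw).trans
      (mul_le_of_le_one_left (pairSum_splitSums_nonneg hr hsum hw) hq1)
  | node l r ihl ihr =>
    simp only [WP.coords, WP.leafList, List.append_assoc, List.singleton_append] at hsum hw ⊢
    obtain ⟨hwl, hwr⟩ := List.forall_mem_append.mp hw
    simpa using cutSum_append_cons_le zero_le_one (by simp [WP.wsum]) (l.length_coords q)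
      (r.length_coords q) hwl hwr (fun _ hr hsum => by simpa using ihl hr hsum hwl)
      (fun _ hr hsum => by simpa using ihr hr hsum hwr) hr (by simpa using hsum)

theorem WP.cutSum_eq_iff_refines_of_length_lt_two (T : WP) (xs : List ℝ) {rs : List ℕ}
    (hsum : rs.sum = T.leafList.length) (hlen : rs.length < 2) :
    cutSum xs rs = pairSum (splitSums rs T.leafList) ↔ T.Refines rs := by
  match rs, hlen with
  | [], _ => have := T.leafList_length_pos; simp only [List.sum_nil] at hsum; omega
  | [r], _ =>
    obtain rfl : r = T.leafList.length := by simpa using hsum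
    exact iff_of_true (by simp [cutSum, splitSums, pairSum]) T.refines_singleton

theorem WP.cutSum_coords_node_lt_of_split {q : ℝ} (hq0 : 0 ≤ q) (hq1 : q ≤ 1) {l r : WP}
    {C D : List ℕ} {a b : ℕ} (hr : ∀ s ∈ C ++ (a + b) :: D, 0 < s)
    (hC : C.sum + a = l.leafList.length) (hD : b + D.sum = r.leafList.length) (ha : 0 < a)
    (hb : 0 < b) (hlen : 2 ≤ (C ++ (a + b) :: D).length) (hwl : ∀ w ∈ l.leafList, 0 < w)
    (hwr : ∀ w ∈ r.leafList, 0 < w) :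
    cutSum (l.coords q ++ l.wsum * r.wsum :: r.coords q) (C ++ (a + b) :: D) <
      pairSum (splitSums (C ++ (a + b) :: D) (l.leafList ++ r.leafList)) := by
  have hrC : ∀ s ∈ C, 0 < s := fun s hs => hr s (by simp [hs])
  have hrD : ∀ s ∈ D, 0 < s := fun s hs => hr s (by simp [hs])
  rw [cutSum_append_cons_of_split _ _ _ hrC ha hb (by have := l.length_coords q; omega),
    pairSum_splitSums_split hC hD]
  have := l.cutSum_coords_le (rs := C ++ [a]) hq0 hq1
    (List.forall_mem_append.mpr ⟨hrC, by simpa⟩) (by simpa using hC) hwl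
  have := r.cutSum_coords_le hq0 hq1 (List.forall_mem_cons.mpr ⟨hb, hrD⟩) hD hwr
  have hCD : 0 < C.sum ∨ b < r.leafList.length := by
    have := C.length_le_sum_of_one_le hrC
    have := D.length_le_sum_of_one_le hrD
    simp only [List.length_append, List.length_cons] at hlen; omega
  have := sum_drop_mul_sum_take_lt hwl hwr (by omega) hb (by omega) hCD
  linarith

theorem WP.cutSum_coords_eq_iff {q : ℝ} (hq : q ∈ Set.Ioo (0 : ℝ) 1) (T : WP) {rs : List ℕ}
    (hr : ∀ r ∈ rs, 0 < r) (hsum : rs.sum = T.leafList.length) (hw : ∀ w ∈ T.leafList, 0 < w) :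
    cutSum (T.coords q) rs = pairSum (splitSums rs T.leafList) ↔ T.Refines rs := by
  induction T generalizing rs with
  | stump u =>
    rcases lt_or_ge rs.length 2 with hlen | hlen
    · exact cutSum_eq_iff_refines_of_length_lt_two _ _ hsum hlen
    refine iff_of_false (ne_of_lt ?_) fun h => ?_
    · have hpos : 0 < pairSum (splitSums rs u.leafList) :=
        pairSum_pos (splitSums_pos hr hsum hw) (by rwa [length_splitSums])
      exact (u.cutSum_coords_le hq.1.le hr hsum hw).trans_lt (mul_lt_of_lt_one_left hpos hq.2)
    · rw [refines_stump_iff.mp h] at hlen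
      simp at hlen
  | node l r ihl ihr =>
    rcases lt_or_ge rs.length 2 with hlen | hlen
    · exact cutSum_eq_iff_refines_of_length_lt_two _ _ hsum hlen
    simp only [WP.coords, WP.leafList, List.append_assoc, List.singleton_append] at hsum hw ⊢
    obtain ⟨hwl, hwr⟩ := List.forall_mem_append.mp hw
    have hA := l.length_coords q
    rcases rs.exists_eq_append_or_eq_split (m := l.leafList.length)
        (by simp only [List.length_append] at hsum; omega) with
      ⟨L, R, rfl, hL⟩ | ⟨C, a, b, D, rfl, hC, ha, hb⟩
    · have hR : R.sum = r.leafList.length := by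
        simp only [List.sum_append, List.length_append] at hsum; omega
      have hrL : ∀ s ∈ L, 0 < s := fun s hs => hr s (by simp [hs])
      have hrR : ∀ s ∈ R, 0 < s := fun s hs => hr s (by simp [hs])
      have := l.cutSum_coords_le hq.1.le hq.2.le hrL hL hwl
      have := r.cutSum_coords_le hq.1.le hq.2.le hrR hR hwr
      have := r.leafList_length_pos
      rw [cutSum_append_cons_of_cut _ _ _ hrL
          (by rintro rfl; simp only [List.sum_nil] at hR; omega) (by omega),
        pairSum_splitSums_append hL hR, refines_node_append_iff hr hL hR, ← ihl hrL hL hwl,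
        ← ihr hrR hR hwr, WP.wsum, WP.wsum]
      constructor
      · intro h; constructor <;> linarith
      · rintro ⟨h1, h2⟩; rw [h1, h2]; ring
    · refine iff_of_false (ne_of_lt ?_) fun h => ?_
      · exact cutSum_coords_node_lt_of_split hq.1.le hq.2.le hr hC
          (by simp only [List.sum_append, List.sum_cons, List.length_append] at hsum; omega)
          ha hb hlen hwl hwr
      · rcases refines_node_iff.mp h with h | ⟨L, R, h, hl, -⟩
        · rw [h] at hlen; simp at hlen
        · exact List.append_ne_split ha hb h.symm (hl.sum_eq.trans hC.symm)

theorem upper_facet_hyperplane_general (q : ℝ) (hq : q ∈ Set.Ioo (0 : ℝ) 1)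
    (T : WP) (n : ℕ) (rs : List ℕ) (hn : T.leafList.length = n)
    (hw : ∀ w ∈ T.leafList, 0 < w)
    (hr : ∀ r ∈ rs, 1 ≤ r) (hsum : rs.sum = n) :
    (∑ i ∈ Finset.range (rs.length - 1),
        ((T.coords q).getD ((rs.take (i + 1)).sum - 1) 0)) ≤
        pairSum (splitSums rs T.leafList) ∧
      ((∑ i ∈ Finset.range (rs.length - 1),
          ((T.coords q).getD ((rs.take (i + 1)).sum - 1) 0)) =
          pairSum (splitSums rs T.leafList) ↔
        ∃ Ts : List WP, PGraft T Ts ∧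
          Ts.map (fun u => u.leafList.length) = rs) := by
  rw [sum_range_getD_eq_cutSum _ hr]
  subst hn
  exact ⟨T.cutSum_coords_le hq.1.le hq.2.le hr hsum hw, T.cutSum_coords_eq_iff hq hr hsum hw⟩

/-- Upper-facet hyperplane lemma: for `q ∈ (0,1)`, positive weights, and a
composition `r_1 + ⋯ + r_t = n` with `t ≥ 2`, every `n`-leaved painted binary
tree `T` satisfies
`x_{r_1} + x_{r_1+r_2} + ⋯ + x_{r_1+⋯+r_{t-1}} ≤ Σ_{1 ≤ i < j ≤ t} R_i R_j`,
with equality iff `T` refines the upper tree `u(t; r_1, …, r_t)`, i.e. iff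
`T` is obtained by grafting painted trees with `r_1, …, r_t` leaves onto a
fully painted binary tree. -/
theorem upper_facet_hyperplane (q : ℝ) (hq : q ∈ Set.Ioo (0 : ℝ) 1)
    (T : WP) (n : ℕ) (rs : List ℕ) (hn : T.leafList.length = n)
    (hw : ∀ w ∈ T.leafList, 0 < w)
    (hr : ∀ r ∈ rs, 1 ≤ r) (hsum : rs.sum = n) (ht : 2 ≤ rs.length) :
    (∑ i ∈ Finset.range (rs.length - 1),
        ((T.coords q).getD ((rs.take (i + 1)).sum - 1) 0)) ≤
        pairSum (splitSums rs T.leafList) ∧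
      ((∑ i ∈ Finset.range (rs.length - 1),
          ((T.coords q).getD ((rs.take (i + 1)).sum - 1) 0)) =
          pairSum (splitSums rs T.leafList) ↔
        ∃ Ts : List WP, PGraft T Ts ∧
          Ts.map (fun u => u.leafList.length) = rs) :=
  upper_facet_hyperplane_general q hq T n rs hn hw hr hsum
end
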